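/- arXiv:2208.07940 — 2 statements merged into one kernel-verified Lean document; each statement's English description precedes it below -/
import Mathlib

section
/- A left cu-uniserial ring either has infinitely many maximal left ideals or is local. -/
/-- The radical of a module: intersection of all maximal submodules. -/
def ModRadical (R M : Type*) [Ring R] [AddCommGroup M] [Module R M] : Submodule R M :=
  sInf {N : Submodule R M | IsCoatom N}

/-- A module is cyclic if it is generated by one element. -/
def IsCyclicMod (R M : Type*) [Ring R] [AddCommGroup M] [Module R M] : Prop :=
  ∃ x : M, Submodule.span R {x} = ⊤

/-- A module is uniform if it is nonzero and any two nonzero submodules intersect nontrivially. -/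
def IsUniformMod (R M : Type*) [Ring R] [AddCommGroup M] [Module R M] : Prop :=
  Nontrivial M ∧ ∀ A B : Submodule R M, A ≠ ⊥ → B ≠ ⊥ → A ⊓ B ≠ ⊥

/-- A module is cyclic-uniform uniserial (cu-uniserial) if it is nonzero and for every
nonzero finitely generated submodule `K`, the quotient `K / Rad K` is cyclic and uniform. -/
def IsCUUniserial (R M : Type*) [Ring R] [AddCommGroup M] [Module R M] : Prop :=
  Nontrivial M ∧ ∀ K : Submodule R M, K ≠ ⊥ → K.FG →
    IsCyclicMod R (↥K ⧸ ModRadical R ↥K) ∧ IsUniformMod R (↥K ⧸ ModRadical R ↥K)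

/-!
With finitely many maximal submodules, `M / Rad M` embeds into the finite product of the simple
modules `M / m`, so it is semisimple. A semisimple module that is uniform is simple, since a
nonzero proper submodule and a complement of it would meet trivially. Hence `Rad M` is itself
maximal, and it is then the only maximal submodule. For `M = R` the uniformity of `R / Rad R` is
the cu-uniserial condition applied to the ideal `R`.
-/

section

variable {R M N : Type*} [Ring R] [AddCommGroup M] [Module R M] [AddCommGroup N] [Module R N]

theorem modRadical_eq_jacobson : ModRadical R M = Module.jacobson R M := rfl

theorem IsUniformMod.of_linearEquiv (e : M ≃ₗ[R] N) (hu : IsUniformMod R M) :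
    IsUniformMod R N := by
  obtain ⟨hnt, hmeet⟩ := hu
  let φ := (Submodule.orderIsoMapComap e).symm
  refine ⟨e.symm.toEquiv.nontrivial, fun A B hA hB hAB => ?_⟩
  refine hmeet (φ A) (φ B) ((map_eq_bot_iff φ).not.mpr hA) ((map_eq_bot_iff φ).not.mpr hB) ?_
  rw [← φ.map_inf, hAB, φ.map_bot]

theorem IsUniformMod.isSimpleModule [IsSemisimpleModule R M] (hu : IsUniformMod R M) :
    IsSimpleModule R M := by
  have := hu.1
  refine { eq_bot_or_eq_top := fun A => or_iff_not_imp_left.mpr fun hA => by_contra fun hA' => ?_ }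
  obtain ⟨C, hAC⟩ := exists_isCompl A
  have hC : C ≠ ⊥ := fun hC => hA' (by simpa [hC] using hAC.sup_eq_top)
  exact hu.2 A C hA hC (disjoint_iff.mp hAC.disjoint)

theorem isSemisimpleModule_quotient_jacobson (hfin : {m : Submodule R M | IsCoatom m}.Finite) :
    IsSemisimpleModule R (M ⧸ Module.jacobson R M) := by
  have := hfin.to_subtype
  have (m : {m : Submodule R M | IsCoatom m}) : IsSimpleModule R (M ⧸ m.1) :=
    isSimpleModule_iff_isCoatom.mpr m.2
  let f := LinearMap.pi fun m : {m : Submodule R M | IsCoatom m} => m.1.mkQ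
  have hker : LinearMap.ker f = Module.jacobson R M := by
    rw [LinearMap.ker_pi]
    simp only [Submodule.ker_mkQ]
    exact (sInf_eq_iInf' _).symm
  exact .of_injective (Submodule.liftQ _ f hker.ge)
    (LinearMap.ker_eq_bot.mp (Submodule.ker_liftQ_eq_bot _ _ _ hker.le))

theorem existsUnique_isCoatom_of_isCoatom_jacobson (h : IsCoatom (Module.jacobson R M)) :
    ∃! m : Submodule R M, IsCoatom m :=
  ⟨_, h, fun _ hm => ((h.le_iff.mp (sInf_le hm)).resolve_left hm.1)⟩

theorem existsUnique_isCoatom_of_isUniformMod_quotient_jacobson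
    (hu : IsUniformMod R (M ⧸ Module.jacobson R M))
    (hfin : {m : Submodule R M | IsCoatom m}.Finite) :
    ∃! m : Submodule R M, IsCoatom m := by
  have := isSemisimpleModule_quotient_jacobson hfin
  exact existsUnique_isCoatom_of_isCoatom_jacobson
    (isSimpleModule_iff_isCoatom.mp hu.isSimpleModule)

theorem IsCUUniserial.isUniformMod_quotient_jacobson (h : IsCUUniserial R R) :
    IsUniformMod R (R ⧸ Ring.jacobson R) := by
  have := h.1
  have hu := (h.2 ⊤ top_ne_bot Module.Finite.fg_top).2
  rw [modRadical_eq_jacobson] at hu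
  exact hu.of_linearEquiv <| Submodule.Quotient.equiv _ _ Submodule.topEquiv
    (Module.map_jacobson_of_bijective Submodule.topEquiv.bijective)

end

theorem stmt12 {R : Type*} [Ring R] (h : IsCUUniserial R R) :
    {I : Ideal R | IsCoatom I}.Infinite ∨ ∃! I : Ideal R, IsCoatom I :=
  or_iff_not_imp_left.mpr fun hfin =>
    existsUnique_isCoatom_of_isUniformMod_quotient_jacobson h.isUniformMod_quotient_jacobson
      (Set.not_infinite.mp hfin)
end

section
/- Let R be a commutative principal ideal domain with infinitely many maximal ideals. Then every proper ideal of R is cu-serial: every nonzero finitely generated subideal J of any proper ideal I satisfies J/Rad(J) cyclic and uniform. -/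
section Helpers

variable {R M N : Type*} [CommRing R] [AddCommGroup M] [Module R M]
  [AddCommGroup N] [Module R N]

lemma modRadical_map (e : M ≃ₗ[R] N) :
    (ModRadical R M).map (e : M →ₗ[R] N) = ModRadical R N := by
  have himg : (Submodule.orderIsoMapComap e) '' {N₀ : Submodule R M | IsCoatom N₀}
      = {P : Submodule R N | IsCoatom P} := by
    ext P
    simp only [Set.mem_image, Set.mem_setOf_eq]
    constructor
    · rintro ⟨Q, hQ, rfl⟩
      exact (OrderIso.isCoatom_iff (Submodule.orderIsoMapComap e) Q).mpr hQ
    · intro hP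
      exact ⟨(Submodule.orderIsoMapComap e).symm P,
        (OrderIso.isCoatom_iff (Submodule.orderIsoMapComap e).symm P).mpr hP,
        Submodule.map_comap_eq_of_surjective e.surjective P⟩
  have h : (Submodule.orderIsoMapComap e) (ModRadical R M) = ModRadical R N := by
    rw [ModRadical, OrderIso.map_sInf, ← sInf_image, himg, ModRadical]
  exact h

lemma isCyclicMod_of_equiv (e : M ≃ₗ[R] N) (h : IsCyclicMod R M) : IsCyclicMod R N := by
  obtain ⟨x, hx⟩ := h
  refine ⟨e x, ?_⟩
  have := congrArg (Submodule.map (e : M →ₗ[R] N)) hx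
  rw [Submodule.map_span, Set.image_singleton, Submodule.map_top,
    LinearEquiv.range] at this
  exact this

lemma isUniformMod_of_equiv (e : M ≃ₗ[R] N) (h : IsUniformMod R M) : IsUniformMod R N := by
  obtain ⟨hnt, hu⟩ := h
  haveI := hnt
  refine ⟨e.symm.toEquiv.nontrivial, ?_⟩
  intro A B hA hB hAB
  have key : ∀ C : Submodule R N, C ≠ ⊥ → C.comap (e : M →ₗ[R] N) ≠ ⊥ := by
    intro C hC hc
    apply hC
    rw [Submodule.comap_equiv_eq_map_symm] at hc
    exact Submodule.map_injective_of_injective e.symm.injective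
      (hc.trans (Submodule.map_bot _).symm)
  apply hu _ _ (key A hA) (key B hB)
  rw [← Submodule.comap_inf, hAB, Submodule.comap_bot, LinearEquiv.ker]

end Helpers

lemma modRadical_self_eq_bot {R : Type*} [CommRing R] [IsDomain R] [IsPrincipalIdealRing R]
    (hmax : {I : Ideal R | IsCoatom I}.Infinite) :
    ModRadical R R = ⊥ := by
  rw [eq_bot_iff]
  intro x hx
  simp only [Submodule.mem_bot]
  by_contra hx0
  -- every coatom contains x
  have hmem : ∀ I : Ideal R, IsCoatom I → x ∈ I := fun I hI =>
    Submodule.mem_sInf.mp hx I hI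
  -- injection from coatoms into divisors of `Associates.mk x`
  haveI : Fintype {a : Associates R // a ∣ Associates.mk x} :=
    UniqueFactorizationMonoid.fintypeSubtypeDvd _ (by
      simpa using hx0)
  set f : {I : Ideal R | IsCoatom I} → {a : Associates R // a ∣ Associates.mk x} :=
    fun I => ⟨Associates.mk (Submodule.IsPrincipal.generator I.1),
      Associates.mk_dvd_mk.mpr
        ((Submodule.IsPrincipal.mem_iff_generator_dvd I.1).mp (hmem I.1 I.2))⟩ with hf
  have hinj : Function.Injective f := by
    intro I J hIJ
    have h1 : Associated (Submodule.IsPrincipal.generator I.1)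
        (Submodule.IsPrincipal.generator J.1) := by
      have := congrArg Subtype.val hIJ
      simpa [hf, Associates.mk_eq_mk_iff_associated] using this
    have h2 : I.1 = J.1 := by
      rw [← Ideal.span_singleton_generator I.1, ← Ideal.span_singleton_generator J.1]
      exact Ideal.span_singleton_eq_span_singleton.mpr h1
    exact Subtype.ext h2
  have : Finite {I : Ideal R | IsCoatom I} := Finite.of_injective f hinj
  exact Set.not_infinite.mpr (Set.toFinite _) hmax

theorem stmt19 {R : Type*} [CommRing R] [IsDomain R] [IsPrincipalIdealRing R]
    (hmax : {I : Ideal R | IsCoatom I}.Infinite) :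
    ∀ I : Ideal R, I ≠ ⊤ → ∀ J : Submodule R ↥I, J ≠ ⊥ → J.FG →
      IsCyclicMod R (↥J ⧸ ModRadical R ↥J) ∧ IsUniformMod R (↥J ⧸ ModRadical R ↥J) := by
  intro I hI J hJ hJfg
  -- J is isomorphic (as a module) to a nonzero ideal of R, hence to R itself.
  set K : Ideal R := J.map I.subtype with hK
  have hIinj : Function.Injective I.subtype := Submodule.injective_subtype I
  have e1 : ↥J ≃ₗ[R] ↥K := Submodule.equivMapOfInjective I.subtype hIinj J
  have hKne : K ≠ ⊥ := by
    intro hc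
    apply hJ
    rw [← Submodule.map_bot I.subtype] at hc
    exact Submodule.map_injective_of_injective hIinj hc
  set a : R := Submodule.IsPrincipal.generator K with ha
  have ha0 : a ≠ 0 := by
    intro hc
    apply hKne
    rw [← Ideal.span_singleton_generator K, ← ha, hc, Ideal.span_singleton_eq_bot]
  have hKspan : Submodule.span R {a} = K := Ideal.span_singleton_generator K
  have e2 : R ≃ₗ[R] ↥K :=
    (LinearEquiv.toSpanNonzeroSingleton R R a ha0).trans (LinearEquiv.ofEq _ _ hKspan)
  -- the composite equivalence J ≃ R
  have e : ↥J ≃ₗ[R] R := e1.trans e2.symm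
  -- transport of radicals and quotients
  have hrad : (ModRadical R ↥J).map (e : ↥J →ₗ[R] R) = ModRadical R R := modRadical_map e
  have q : (↥J ⧸ ModRadical R ↥J) ≃ₗ[R] (R ⧸ ModRadical R R) :=
    Submodule.Quotient.equiv _ _ e hrad
  have hbot : ModRadical R R = ⊥ := modRadical_self_eq_bot hmax
  have q2 : (R ⧸ ModRadical R R) ≃ₗ[R] R := Submodule.quotEquivOfEqBot _ hbot
  have q3 : (↥J ⧸ ModRadical R ↥J) ≃ₗ[R] R := q.trans q2
  constructor
  · apply isCyclicMod_of_equiv q3.symm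
    refine ⟨1, ?_⟩
    rw [Submodule.eq_top_iff']
    intro x
    rw [Submodule.mem_span_singleton]
    exact ⟨x, by simp⟩
  · apply isUniformMod_of_equiv q3.symm
    refine ⟨inferInstance, ?_⟩
    intro A B hA hB hAB
    obtain ⟨u, hu, hu0⟩ := Submodule.exists_mem_ne_zero_of_ne_bot hA
    obtain ⟨v, hv, hv0⟩ := Submodule.exists_mem_ne_zero_of_ne_bot hB
    have huv : u * v ∈ A ⊓ B :=
      ⟨by simpa [mul_comm, smul_eq_mul] using A.smul_mem v hu,
       by simpa [smul_eq_mul] using B.smul_mem u hv⟩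
    rw [hAB] at huv
    exact mul_ne_zero hu0 hv0 (Submodule.mem_bot R |>.mp huv)
end
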